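/- arXiv:2105.06013 — 5 statements merged into one kernel-verified Lean document; each statement's English description precedes it below -/
import Mathlib

section
/- Let T(X) = X^n + X^s + 1 over GF(2), with 0 < s < n, be almost primitive, i.e., T has a primitive factor of degree r for some r > n/2. Then gcd(n, s) = 1. -/
/-!
If `d = gcd(n, s) ≥ 2`, write `n = dq`, `s = dt`, so that `X^n + X^s + 1 = G(X^d)` with
`G = X^q + X^t + 1`. For a root `x` of the primitive factor `D` of degree `r`, the element `x^d`
is a root of `G`, hence lies in a subfield with `2^m` elements for some `m ≤ q`, and
`x^(d(2^m - 1)) = 1`. So the period `2^r - 1` of `D` is at most `d(2^q - 1)`, which is too small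
once `dq = n < 2r`.
-/

open Polynomial

/-- A polynomial `P` over GF(2) has period `ρ`: `ρ` is the least positive
integer such that `P` divides `X^ρ - 1`. -/
def HasPeriod (P : Polynomial (ZMod 2)) (ρ : ℕ) : Prop :=
  0 < ρ ∧ P ∣ X ^ ρ - 1 ∧ ∀ m : ℕ, 0 < m → P ∣ X ^ m - 1 → ρ ≤ m

/-- A polynomial `P` of degree `n > 0` over GF(2) is primitive if it is
irreducible and has period `2^n - 1`. -/
def IsPrimitivePoly (P : Polynomial (ZMod 2)) : Prop :=
  0 < P.natDegree ∧ Irreducible P ∧ HasPeriod P (2 ^ P.natDegree - 1)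

lemma mul_two_pow_sub_one_lt_two_pow_sub_one {d q r : ℕ} (hd : 2 ≤ d) (hq : 2 ≤ q)
    (hr : d * q < 2 * r) : d * (2 ^ q - 1) < 2 ^ r - 1 := by
  have hexp : q + (d - 1) ≤ r := by
    -- from `(d - 2) * (q - 2) ≥ 0` and the parity slack in `d * q < 2 * r`
    have : 2 * (q + d) ≤ d * q + 4 := by nlinarith
    omega
  have hd_le : d ≤ 2 ^ (d - 1) := by
    have := (d - 1).lt_two_pow_self
    omega
  have hmul : d * 2 ^ q ≤ 2 ^ r :=
    calc d * 2 ^ q ≤ 2 ^ (d - 1) * 2 ^ q := Nat.mul_le_mul_right _ hd_le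
      _ = 2 ^ (q + (d - 1)) := by rw [pow_add, mul_comm]
      _ ≤ 2 ^ r := Nat.pow_le_pow_right two_pos hexp
  rw [Nat.mul_sub_one]
  have : d ≤ d * 2 ^ q := Nat.le_mul_of_pos_right d (Nat.two_pow_pos q)
  omega

lemma AdjoinRoot.root_pow_eq_one_iff {R : Type*} [CommRing R] {f : R[X]} {k : ℕ} :
    root f ^ k = 1 ↔ f ∣ X ^ k - 1 := by
  rw [← mk_eq_zero, ← aeval_eq, map_sub, map_pow, aeval_X, map_one, sub_eq_zero]

lemma pow_card_pow_natDegree_minpoly_sub_one_eq_one {F K : Type*} [Field F] [Finite F] [Field K]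
    [Algebra F K] {y : K} (hy : IsIntegral F y) (hy0 : y ≠ 0) :
    y ^ (Nat.card F ^ (minpoly F y).natDegree - 1) = 1 := by
  have hdvd := (minpoly.irreducible hy).natDegree_dvd_iff_dvd_X_pow_card_pow_sub_X.mp dvd_rfl
  have hfrob : y ^ Nat.card F ^ (minpoly F y).natDegree = y := by
    simpa [sub_eq_zero] using aeval_eq_zero_of_dvd_aeval_eq_zero hdvd (minpoly.aeval F y)
  have hpos : 0 < Nat.card F ^ (minpoly F y).natDegree := pow_pos Finite.card_pos _
  rw [← Nat.sub_add_cancel hpos, pow_succ] at hfrob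
  exact mul_left_cancel₀ hy0 (by rw [mul_comm, hfrob, mul_one])

lemma HasPeriod.le_mul_of_dvd_comp {P G : (ZMod 2)[X]} {ρ d : ℕ} (hP : HasPeriod P ρ)
    (hirr : Irreducible P) (hG : G ≠ 0) (hd : 0 < d) (hdvd : P ∣ G.comp (X ^ d)) :
    ρ ≤ d * (2 ^ G.natDegree - 1) := by
  have := Fact.mk hirr
  set x := AdjoinRoot.root P
  have hx0 : x ≠ 0 :=
    ne_zero_pow hP.1.ne' (by rw [AdjoinRoot.root_pow_eq_one_iff.mpr hP.2.1]; exact one_ne_zero)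
  have hy : aeval (x ^ d) G = 0 := by
    have : aeval x (G.comp (X ^ d)) = 0 := by
      rw [AdjoinRoot.aeval_eq, AdjoinRoot.mk_eq_zero.mpr hdvd]
    rwa [aeval_comp, map_pow, aeval_X] at this
  have hyint : IsIntegral (ZMod 2) (x ^ d) := IsAlgebraic.isIntegral ⟨G, hG, hy⟩
  set m := (minpoly (ZMod 2) (x ^ d)).natDegree
  have hm : (x ^ d) ^ (2 ^ m - 1) = 1 := by
    simpa using pow_card_pow_natDegree_minpoly_sub_one_eq_one hyint (pow_ne_zero d hx0)
  have hm_pos : 0 < m := minpoly.natDegree_pos hyint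
  have hmG : m ≤ G.natDegree := natDegree_le_of_dvd (minpoly.dvd _ _ hy) hG
  calc ρ ≤ d * (2 ^ m - 1) := by
        refine hP.2.2 _ (Nat.mul_pos hd ?_) (AdjoinRoot.root_pow_eq_one_iff.mp ?_)
        · exact Nat.sub_pos_of_lt (Nat.one_lt_two_pow hm_pos.ne')
        · rwa [pow_mul]
    _ ≤ d * (2 ^ G.natDegree - 1) := by gcongr; exact one_le_two

/-- If the trinomial `X^n + X^s + 1` over GF(2) (with `0 < s < n`) is almost
primitive, i.e. it has a primitive factor of degree `r` for some `r > n/2`,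
then `gcd(n, s) = 1`. -/
theorem gcd_eq_one_of_almost_primitive (n s : ℕ) (hs : 0 < s) (hsn : s < n)
    (hAP : ∃ D : Polynomial (ZMod 2), IsPrimitivePoly D ∧
      D ∣ (X ^ n + X ^ s + 1 : Polynomial (ZMod 2)) ∧ n < 2 * D.natDegree) :
    Nat.gcd n s = 1 := by
  obtain ⟨D, ⟨-, hirr, hper⟩, hdvd, hnD⟩ := hAP
  by_contra hne
  set d := n.gcd s
  have hd : 2 ≤ d := by have := Nat.gcd_pos_of_pos_right n hs; omega
  obtain ⟨q, hq⟩ : d ∣ n := Nat.gcd_dvd_left n s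
  obtain ⟨t, ht⟩ : d ∣ s := Nat.gcd_dvd_right n s
  have htq : t < q := Nat.lt_of_mul_lt_mul_left (hq ▸ ht ▸ hsn)
  have ht0 : 0 < t := Nat.pos_of_ne_zero (by rintro rfl; omega)
  have hG : (X ^ q + X ^ t + 1 : (ZMod 2)[X]).natDegree = q := by
    compute_degree!
    all_goals simp [htq.ne', (ht0.trans htq).ne', htq.le]
  have hcomp : (X ^ q + X ^ t + 1 : (ZMod 2)[X]).comp (X ^ d) = X ^ n + X ^ s + 1 := by
    simp only [add_comp, X_pow_comp, one_comp, ← pow_mul, hq, ht, mul_comm]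
  have hle := hper.le_mul_of_dvd_comp hirr (ne_zero_of_natDegree_gt (hG ▸ ht0.trans htq))
    (by omega) (hcomp ▸ hdvd)
  rw [hG] at hle
  exact (mul_two_pow_sub_one_lt_two_pow_sub_one hd (by omega) (hq ▸ hnD)).not_ge hle
end

section
/- Over GF(2), X^16 + X^3 + 1 = (X^3 + X^2 + 1)·D(X), where D(X) = X^13 + X^12 + X^11 + X^9 + X^6 + X^5 + X^4 + X^2 + 1 is a primitive polynomial of degree 13. Consequently, the trinomial X^16 + X^3 + 1 is almost primitive with exponent 13 and increment 3. -/
open Polynomial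

/-!
Since `2 ^ 13 - 1 = 8191` is a (Mersenne) prime, primitivity of `D` follows from
`X ^ 8191 ≡ 1 (mod D)` together with `D(1) ≠ 0`. Indeed, the root of any irreducible factor `q`
of `D` then has order exactly `8191` in the field `GF(2)[X]/(q)`, which has `2 ^ deg q` elements,
so `8191 ∣ 2 ^ deg q - 1` and `deg q = 13`: `D` is irreducible, and its period is the order of its
root. The congruence is verified by evaluating `X ^ (2 ^ k - 1) mod D` on coefficient lists
through the recursion `y ↦ X * y ^ 2`.
-/

open AdjoinRoot

theorem dvd_X_pow_sub_one_iff_root_pow_eq_one {R : Type*} [CommRing R] (P : R[X]) (m : ℕ) :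
    P ∣ X ^ m - 1 ↔ root P ^ m = 1 := by
  rw [← mk_eq_zero, map_sub, map_pow, mk_X, map_one, sub_eq_zero]

theorem hasPeriod_iff_orderOf_root {P : (ZMod 2)[X]} {ρ : ℕ} (hρ : 0 < ρ) :
    HasPeriod P ρ ↔ orderOf (root P) = ρ := by
  simp only [HasPeriod, dvd_X_pow_sub_one_iff_root_pow_eq_one, orderOf_eq_iff hρ, hρ, true_and]
  exact and_congr_right fun _ =>
    ⟨fun h m hm hm0 hx => (h m hm0 hx).not_gt hm, fun h m hm0 hx => not_lt.1 fun hm => h m hm hm0 hx⟩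

section FiniteField

variable {K : Type*} [Field K]

theorem root_ne_one_of_dvd {q P : K[X]} (hq : Irreducible q) (hqP : q ∣ P)
    (h1 : ¬ P.IsRoot 1) : root q ≠ 1 := by
  intro h
  have hq1 : q ∣ X - C 1 := mk_eq_zero.1 (by simp [h])
  exact h1 (dvd_iff_isRoot.1 ((hq.associated_of_dvd (irreducible_X_sub_C 1) hq1).symm.dvd.trans hqP))

variable [Fintype K]

theorem orderOf_root_dvd_card_pow_natDegree_sub_one {q : K[X]} (hq : Irreducible q)
    (h0 : root q ≠ 0) : orderOf (root q) ∣ Fintype.card K ^ q.natDegree - 1 := by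
  have := Fact.mk hq
  have : Module.Finite K (AdjoinRoot q) := (powerBasis hq.ne_zero).finite
  have : Finite (AdjoinRoot q) := Module.finite_of_finite K
  let := Fintype.ofFinite (AdjoinRoot q)
  have hcard : Fintype.card (AdjoinRoot q) = Fintype.card K ^ q.natDegree := by
    rw [Module.card_eq_pow_finrank (K := K), (powerBasis hq.ne_zero).finrank, powerBasis_dim]
  exact orderOf_dvd_of_pow_eq_one (hcard ▸ FiniteField.pow_card_sub_one_eq_one _ h0)

theorem natDegree_le_of_irreducible_dvd {P q : K[X]}
    (hN : (Fintype.card K ^ P.natDegree - 1).Prime)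
    (hroot : root P ^ (Fintype.card K ^ P.natDegree - 1) = 1) (h1 : ¬ P.IsRoot 1)
    (hq : Irreducible q) (hqP : q ∣ P) : P.natDegree ≤ q.natDegree := by
  have := Fact.mk hN
  have := Fact.mk hq
  have hq_root : root q ^ (Fintype.card K ^ P.natDegree - 1) = 1 :=
    (dvd_X_pow_sub_one_iff_root_pow_eq_one q _).1
      (hqP.trans ((dvd_X_pow_sub_one_iff_root_pow_eq_one P _).2 hroot))
  have hord := orderOf_eq_prime hq_root (root_ne_one_of_dvd hq hqP h1)
  have h0 : root q ≠ 0 := fun h => by simp [h, zero_pow hN.ne_zero] at hq_root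
  have hdvd := orderOf_root_dvd_card_pow_natDegree_sub_one hq h0
  rw [hord] at hdvd
  have hcard : 1 < Fintype.card K := Fintype.one_lt_card
  have hpos : 0 < Fintype.card K ^ q.natDegree - 1 := by
    have := Nat.one_lt_pow hq.natDegree_pos.ne' hcard
    omega
  have := Nat.le_of_dvd hpos hdvd
  exact (Nat.pow_le_pow_iff_right hcard).1 (by omega)

end FiniteField

theorem isPrimitivePoly_of_root_pow_mersenne {P : (ZMod 2)[X]}
    (hN : (2 ^ P.natDegree - 1).Prime) (hroot : root P ^ (2 ^ P.natDegree - 1) = 1)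
    (h1 : ¬ P.IsRoot 1) : IsPrimitivePoly P := by
  have hdeg : 0 < P.natDegree := Nat.pos_of_ne_zero fun h => by simp [h, Nat.not_prime_zero] at hN
  have hP0 : P ≠ 0 := by rintro rfl; simp at h1
  have hirr : Irreducible P := by
    obtain ⟨q, hq, hqP⟩ :=
      WfDvdMonoid.exists_irreducible_factor (not_isUnit_of_natDegree_pos P hdeg) hP0
    refine (associated_of_dvd_of_natDegree_le hqP hP0 ?_).irreducible hq
    exact natDegree_le_of_irreducible_dvd (by simpa using hN) (by simpa using hroot) h1 hq hqP
  have := Fact.mk hN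
  exact ⟨hdeg, hirr, (hasPeriod_iff_orderOf_root hN.pos).2
    (orderOf_eq_prime hroot (root_ne_one_of_dvd hirr dvd_rfl h1))⟩

namespace BitPoly

/-- Big-endian: `[b₀, …, bₖ]` encodes `b₀ X ^ k + ⋯ + bₖ`. -/
noncomputable def ofBits : List Bool → (ZMod 2)[X]
  | [] => 0
  | b :: l => (if b then X ^ l.length else 0) + ofBits l

theorem ofBits_append_singleton (l : List Bool) (c : Bool) :
    ofBits (l ++ [c]) = X * ofBits l + if c then 1 else 0 := by
  induction l with
  | nil => simp [ofBits]
  | cons b l ih => cases b <;> simp [ofBits, ih, pow_succ]; ring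

theorem ofBits_replicate_false (n : ℕ) : ofBits (List.replicate n false) = 0 := by
  induction n with
  | zero => rfl
  | succ n ih => simp [List.replicate_succ, ofBits, ih]

theorem ite_xor_eq_add (a b : Bool) (p : (ZMod 2)[X]) :
    (if xor a b then p else 0) = (if a then p else 0) + if b then p else 0 := by
  cases a <;> cases b <;> simp [CharTwo.add_self_eq_zero]

theorem ofBits_zipWith_xor : ∀ {a b : List Bool}, a.length = b.length →
    ofBits (List.zipWith xor a b) = ofBits a + ofBits b
  | [], [], _ => by simp [ofBits]
  | a :: as, b :: bs, h => by
    have hl : as.length = bs.length := by simpa using h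
    simp only [List.zipWith_cons_cons, ofBits, List.length_zipWith, hl, min_self,
      ite_xor_eq_add, ofBits_zipWith_xor hl]
    ring

/-- The modulus encoded by a tail `t` of length `n` is `X ^ n + ofBits t`; remainders are
bit lists of length `n`. -/
noncomputable def monic (t : List Bool) : (ZMod 2)[X] :=
  X ^ t.length + ofBits t

section Reduction

variable (t : List Bool)

/-- In characteristic `2`, `X ^ n ≡ ofBits t` modulo `monic t`. -/
def mulXMod : List Bool → List Bool
  | [] => []
  | b :: l => if b then List.zipWith xor (l ++ [false]) t else l ++ [false]

def mulXModAdd (b r : List Bool) (c : Bool) : List Bool :=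
  if c then List.zipWith xor (mulXMod t r) b else mulXMod t r

def mulMod (a b : List Bool) : List Bool :=
  a.foldl (mulXModAdd t b) (List.replicate t.length false)

def mersennePow : ℕ → List Bool
  | 0 => List.replicate (t.length - 1) false ++ [true]
  | k + 1 => let y := mersennePow k; mulXMod t (mulMod t y y)

variable {t}

theorem length_mulXMod {r : List Bool} (hr : r.length = t.length) :
    (mulXMod t r).length = t.length := by
  cases r with
  | nil => simpa [mulXMod] using hr
  | cons b l => cases b <;> simp [mulXMod, ← hr]

theorem length_mulXModAdd {b r : List Bool} (hb : b.length = t.length)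
    (hr : r.length = t.length) (c : Bool) : (mulXModAdd t b r c).length = t.length := by
  cases c <;> simp [mulXModAdd, length_mulXMod hr, hb]

theorem length_mulMod (a : List Bool) {b : List Bool} (hb : b.length = t.length) :
    (mulMod t a b).length = t.length := by
  suffices ∀ r, r.length = t.length → (a.foldl (mulXModAdd t b) r).length = t.length from
    this _ List.length_replicate
  induction a with
  | nil => exact fun r hr => hr
  | cons c a ih => exact fun r hr => ih _ (length_mulXModAdd hb hr c)

theorem length_mersennePow (ht : t ≠ []) (k : ℕ) : (mersennePow t k).length = t.length := by
  cases k with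
  | zero =>
    have := List.length_pos_iff.2 ht
    simp [mersennePow]
    omega
  | succ k => exact length_mulXMod (length_mulMod _ (length_mersennePow ht k))

theorem mk_ofBits_mulXMod {r : List Bool} (hr : r.length = t.length) :
    mk (monic t) (ofBits (mulXMod t r)) = root (monic t) * mk (monic t) (ofBits r) := by
  rw [← mk_X, ← map_mul, mk_eq_mk, monic]
  cases r with
  | nil => simp [mulXMod, ofBits]
  | cons b l =>
    have hn : t.length = l.length + 1 := by simpa using hr.symm
    rw [hn]
    cases b
    · simp [mulXMod, ofBits, ofBits_append_singleton]
    · refine ⟨1, ?_⟩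
      simp only [mulXMod, ofBits, if_true,
        ofBits_zipWith_xor (a := l ++ [false]) (b := t) (by simp [hn]),
        ofBits_append_singleton, Bool.false_eq_true, if_false, add_zero]
      linear_combination (-X ^ (l.length + 1)) * (CharTwo.two_eq_zero : (2 : (ZMod 2)[X]) = 0)

theorem mk_ofBits_mulXModAdd {b r : List Bool} (hb : b.length = t.length)
    (hr : r.length = t.length) (c : Bool) :
    mk (monic t) (ofBits (mulXModAdd t b r c)) =
      root (monic t) * mk (monic t) (ofBits r) + if c then mk (monic t) (ofBits b) else 0 := by
  cases c
  · simp [mulXModAdd, mk_ofBits_mulXMod hr]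
  · simp [mulXModAdd, mk_ofBits_mulXMod hr,
      ofBits_zipWith_xor (a := mulXMod t r) (b := b) ((length_mulXMod hr).trans hb.symm)]

theorem mk_ofBits_mulMod (a : List Bool) {b : List Bool} (hb : b.length = t.length) :
    mk (monic t) (ofBits (mulMod t a b)) = mk (monic t) (ofBits a) * mk (monic t) (ofBits b) := by
  suffices ∀ r, r.length = t.length →
      mk (monic t) (ofBits (a.foldl (mulXModAdd t b) r)) =
        root (monic t) ^ a.length * mk (monic t) (ofBits r) +
          mk (monic t) (ofBits a) * mk (monic t) (ofBits b) by
    simpa [mulMod, ofBits_replicate_false] using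
      this (List.replicate t.length false) List.length_replicate
  induction a with
  | nil => simp [ofBits]
  | cons c a ih =>
    intro r hr
    rw [List.foldl_cons, ih _ (length_mulXModAdd hb hr c), mk_ofBits_mulXModAdd hb hr]
    cases c <;> simp [ofBits, pow_succ] <;> ring

theorem mk_ofBits_mersennePow (ht : t ≠ []) (k : ℕ) :
    mk (monic t) (ofBits (mersennePow t k)) = root (monic t) ^ (2 ^ k - 1) := by
  induction k with
  | zero => simp [mersennePow, ofBits_append_singleton, ofBits_replicate_false]
  | succ k ih =>
    have hexp : 2 ^ (k + 1) - 1 = 2 ^ k - 1 + (2 ^ k - 1) + 1 := by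
      have := Nat.one_le_two_pow (n := k)
      rw [pow_succ]
      omega
    rw [mersennePow, mk_ofBits_mulXMod (length_mulMod _ (length_mersennePow ht k)),
      mk_ofBits_mulMod _ (length_mersennePow ht k), ih, hexp, pow_succ, pow_add]
    ring

theorem root_pow_mersenne_eq_one (ht : t ≠ []) {k : ℕ}
    (hk : mersennePow t k = mersennePow t 0) : root (monic t) ^ (2 ^ k - 1) = 1 := by
  rw [← mk_ofBits_mersennePow ht, hk, mk_ofBits_mersennePow ht, pow_zero, Nat.sub_self, pow_zero]

end Reduction

end BitPoly

theorem isPrimitivePoly_trinomial_16_3_factor :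
    IsPrimitivePoly
      (X ^ 13 + X ^ 12 + X ^ 11 + X ^ 9 + X ^ 6 + X ^ 5 + X ^ 4 + X ^ 2 + 1 : (ZMod 2)[X]) := by
  have hdeg : (X ^ 13 + X ^ 12 + X ^ 11 + X ^ 9 + X ^ 6 + X ^ 5 + X ^ 4 + X ^ 2 + 1 :
      (ZMod 2)[X]).natDegree = 13 := by compute_degree!
  refine isPrimitivePoly_of_root_pow_mersenne (by rw [hdeg]; norm_num) ?_ (by simp; decide)
  have hbits : (X ^ 13 + X ^ 12 + X ^ 11 + X ^ 9 + X ^ 6 + X ^ 5 + X ^ 4 + X ^ 2 + 1 :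
      (ZMod 2)[X]) = BitPoly.monic
        [true, true, false, true, false, false, true, true, true, false, true, false, true] := by
    simp [BitPoly.monic, BitPoly.ofBits]
    ring
  rw [hdeg, hbits]
  exact BitPoly.root_pow_mersenne_eq_one (List.cons_ne_nil _ _) (k := 13) (by decide)

/-- Over GF(2), `X^16 + X^3 + 1 = (X^3 + X^2 + 1) · D` where
`D = X^13 + X^12 + X^11 + X^9 + X^6 + X^5 + X^4 + X^2 + 1` is a primitive
polynomial of degree 13; hence `X^16 + X^3 + 1` is almost primitive with
exponent 13 and increment 3 (it has a primitive factor of degree 13 > 16/2). -/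
theorem trinomial_16_3_almost_primitive :
    (X ^ 16 + X ^ 3 + 1 : Polynomial (ZMod 2)) =
      (X ^ 3 + X ^ 2 + 1) *
        (X ^ 13 + X ^ 12 + X ^ 11 + X ^ 9 + X ^ 6 + X ^ 5 + X ^ 4 + X ^ 2 + 1) ∧
    (X ^ 13 + X ^ 12 + X ^ 11 + X ^ 9 + X ^ 6 + X ^ 5 + X ^ 4 + X ^ 2 + 1 :
      Polynomial (ZMod 2)).natDegree = 13 ∧
    IsPrimitivePoly
      (X ^ 13 + X ^ 12 + X ^ 11 + X ^ 9 + X ^ 6 + X ^ 5 + X ^ 4 + X ^ 2 + 1) ∧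
    ∃ D : Polynomial (ZMod 2), IsPrimitivePoly D ∧
      D ∣ (X ^ 16 + X ^ 3 + 1 : Polynomial (ZMod 2)) ∧
      D.natDegree = 13 ∧ 16 < 2 * 13 := by
  have hfactor : (X ^ 16 + X ^ 3 + 1 : Polynomial (ZMod 2)) = (X ^ 3 + X ^ 2 + 1) *
      (X ^ 13 + X ^ 12 + X ^ 11 + X ^ 9 + X ^ 6 + X ^ 5 + X ^ 4 + X ^ 2 + 1) := by
    ring_nf
    reduce_mod_char
  have hdeg : (X ^ 13 + X ^ 12 + X ^ 11 + X ^ 9 + X ^ 6 + X ^ 5 + X ^ 4 + X ^ 2 + 1 :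
      Polynomial (ZMod 2)).natDegree = 13 := by compute_degree!
  exact ⟨hfactor, hdeg, isPrimitivePoly_trinomial_16_3_factor, _,
    isPrimitivePoly_trinomial_16_3_factor, Dvd.intro_left _ hfactor.symm, hdeg, by norm_num⟩
end

section
/- Over GF(2), the trinomial X^13 + X + 1 factors as (X^5 + X^4 + X^3 + X + 1)·D(X), where D(X) is a primitive polynomial of degree 8. Consequently, X^13 + X + 1 is almost primitive with exponent 8 = 2^3 and increment 5. -/
open Polynomial

set_option maxHeartbeats 2000000

lemma two_zero : (2 : Polynomial (ZMod 2)) = 0 := by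
  have h1 : (C (2:ZMod 2) : Polynomial (ZMod 2)) = 2 := map_ofNat C 2
  have h2 : (2:ZMod 2) = 0 := by decide
  rw [h2] at h1
  simpa using h1.symm

lemma four_zero : (4 : Polynomial (ZMod 2)) = 0 := by
  have : (4 : Polynomial (ZMod 2)) = 2 * 2 := by norm_num
  rw [this, two_zero, mul_zero]

lemma neg_one_one : (-1 : Polynomial (ZMod 2)) = 1 := by
  have h : (1 : Polynomial (ZMod 2)) + 1 = 0 := by rw [← two_zero]; norm_num
  linear_combination -h

/-- The cofactor `D = X^8 + X^7 + X^5 + X^3 + 1`. -/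
noncomputable def Dp : Polynomial (ZMod 2) := X ^ 8 + X ^ 7 + X ^ 5 + X ^ 3 + 1

lemma Dp_natDegree : Dp.natDegree = 8 := by
  unfold Dp; compute_degree!

lemma Dp_ne_zero : Dp ≠ 0 := by
  intro h
  have := Dp_natDegree
  rw [h] at this
  simp at this

lemma Dp_coeff_zero : Dp.coeff 0 = 1 := by
  unfold Dp
  simp [coeff_X_pow, coeff_one]

lemma not_X_dvd_Dp : ¬ (X : Polynomial (ZMod 2)) ∣ Dp := by
  rw [X_dvd_iff, Dp_coeff_zero]
  exact one_ne_zero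

/-- `X^k - 1` divides `X^n - 1` when `k ∣ n`. -/
lemma pow_sub_one_dvd_pow_sub_one {k n : ℕ} (h : k ∣ n) :
    (X ^ k - 1 : Polynomial (ZMod 2)) ∣ X ^ n - 1 := by
  obtain ⟨c, rfl⟩ := h
  have := sub_dvd_pow_sub_pow (X ^ k : Polynomial (ZMod 2)) 1 c
  simpa [← pow_mul] using this

/-- If `P ∣ X^a - 1` and `P ∣ X^b - 1` then `P ∣ X^gcd(a,b) - 1`. -/
lemma dvd_pow_gcd_sub_one (P : Polynomial (ZMod 2)) :
    ∀ a b : ℕ, P ∣ X ^ a - 1 → P ∣ X ^ b - 1 → P ∣ X ^ Nat.gcd a b - 1 := by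
  intro a
  induction a using Nat.strong_induction_on with
  | _ a ih =>
    intro b ha hb
    rcases Nat.eq_zero_or_pos a with rfl | hpos
    · simpa [Nat.gcd_zero_left] using hb
    · rw [Nat.gcd_rec]
      refine ih (b % a) (Nat.mod_lt b hpos) a ?_ ha
      -- show P ∣ X ^ (b % a) - 1
      have hdecomp : (X : Polynomial (ZMod 2)) ^ (b % a) - 1 =
          (X ^ b - 1) - X ^ (b % a) * (X ^ (a * (b / a)) - 1) := by
        have hb' : a * (b / a) + b % a = b := Nat.div_add_mod b a
        have hXb : (X : Polynomial (ZMod 2)) ^ b = X ^ (a * (b / a)) * X ^ (b % a) := by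
          rw [← pow_add, hb']
        rw [hXb]; ring
      rw [hdecomp]
      have h1 : P ∣ X ^ (a * (b / a)) - 1 :=
        dvd_trans ha (pow_sub_one_dvd_pow_sub_one ⟨b / a, rfl⟩)
      exact dvd_sub hb (Dvd.dvd.mul_left h1 _)

/-- Field-theoretic fact: an irreducible `P` over GF(2) not divisible by `X`
divides `X^(2^deg P - 1) - 1`. -/
lemma irreducible_dvd_pow_sub_one (P : Polynomial (ZMod 2)) (hirr : Irreducible P)
    (hx : ¬ (X : Polynomial (ZMod 2)) ∣ P) :
    P ∣ X ^ (2 ^ P.natDegree - 1) - 1 := by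
  haveI : Fact (Irreducible P) := ⟨hirr⟩
  have hP0 : P ≠ 0 := hirr.ne_zero
  let pb := AdjoinRoot.powerBasis hP0
  haveI : Fintype (AdjoinRoot P) := Module.fintypeOfFintype pb.basis
  have hcard : Fintype.card (AdjoinRoot P) = 2 ^ P.natDegree := by
    rw [Module.card_fintype pb.basis]
    simp [pb, ZMod.card]
  have hroot : AdjoinRoot.root P ≠ 0 := by
    intro h0
    have : P ∣ X := by
      rw [← AdjoinRoot.mk_X (f := P), AdjoinRoot.mk_eq_zero] at h0
      exact h0
    rcases (prime_X (R := ZMod 2)).irreducible.isUnit_or_isUnit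
      (a := P) (b := Classical.choose this) (Classical.choose_spec this) with hu | hu
    · exact hirr.not_isUnit hu
    · apply hx
      obtain ⟨u, hu'⟩ := hu.exists_right_inv
      refine ⟨u, ?_⟩
      have hXeq := Classical.choose_spec this
      calc P = P * (Classical.choose this * u) := by rw [hu', mul_one]
        _ = X * u := by rw [← mul_assoc, ← hXeq]
    
  have hpow : (AdjoinRoot.root P) ^ (2 ^ P.natDegree - 1) = 1 := by
    have := FiniteField.pow_card_sub_one_eq_one (AdjoinRoot.root P) hroot
    rwa [hcard] at this
  rw [← AdjoinRoot.mk_eq_zero]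
  rw [map_sub, map_pow, AdjoinRoot.mk_X, map_one, hpow, sub_self]
lemma bez7 : (X ^ 6 + X ^ 5 + X ^ 4 + X ^ 3 + X ^ 2 : Polynomial (ZMod 2)) * Dp + (X ^ 7 + X ^ 4 + X ^ 3 + X ^ 2 + 1) * (X ^ 7 - 1) = 1 := by
  unfold Dp; ring_nf
  simp only [two_zero, four_zero, neg_one_one, mul_zero, zero_mul, mul_one, one_mul, add_zero, zero_add]

lemma bez15 : (X ^ 13 + X ^ 10 + X ^ 9 + X ^ 8 + X ^ 6 + X ^ 4 + X ^ 3 + X + 1 : Polynomial (ZMod 2)) * Dp + (X ^ 6 + X ^ 5 + X) * (X ^ 15 - 1) = 1 := by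
  unfold Dp; ring_nf
  simp only [two_zero, four_zero, neg_one_one, mul_zero, zero_mul, mul_one, one_mul, add_zero, zero_add]

lemma bez51 : (X ^ 48 + X ^ 45 + X ^ 44 + X ^ 42 + X ^ 36 + X ^ 35 + X ^ 33 + X ^ 31 + X ^ 30 + X ^ 29 + X ^ 24 + X ^ 22 + X ^ 21 + X ^ 20 + X ^ 19 + X ^ 16 + X ^ 12 + X ^ 11 + X ^ 10 + X ^ 6 + X ^ 4 + X ^ 3 + 1 : Polynomial (ZMod 2)) * Dp + (X ^ 5 + X ^ 4) * (X ^ 51 - 1) = 1 := by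
  unfold Dp; ring_nf
  simp only [two_zero, four_zero, neg_one_one, mul_zero, zero_mul, mul_one, one_mul, add_zero, zero_add]

lemma bez85 : (X ^ 84 + X ^ 81 + X ^ 80 + X ^ 79 + X ^ 78 + X ^ 76 + X ^ 75 + X ^ 73 + X ^ 72 + X ^ 71 + X ^ 69 + X ^ 65 + X ^ 64 + X ^ 62 + X ^ 61 + X ^ 58 + X ^ 57 + X ^ 56 + X ^ 53 + X ^ 51 + X ^ 50 + X ^ 48 + X ^ 46 + X ^ 43 + X ^ 41 + X ^ 40 + X ^ 39 + X ^ 37 + X ^ 36 + X ^ 35 + X ^ 34 + X ^ 33 + X ^ 31 + X ^ 30 + X ^ 29 + X ^ 26 + X ^ 25 + X ^ 20 + X ^ 19 + X ^ 16 + X ^ 14 + X ^ 12 + X ^ 8 + X ^ 6 + X ^ 4 + X ^ 3 + X ^ 2 + X + 1 : Polynomial (ZMod 2)) * Dp + (X ^ 7 + X ^ 6 + X ^ 2 + X) * (X ^ 85 - 1) = 1 := by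
  unfold Dp; ring_nf
  simp only [two_zero, four_zero, neg_one_one, mul_zero, zero_mul, mul_one, one_mul, add_zero, zero_add]

lemma natDegree_pos_of_not_unit (p : Polynomial (ZMod 2)) (h0 : p ≠ 0) (hnu : ¬ IsUnit p) :
    0 < p.natDegree := by
  rcases Nat.eq_zero_or_pos p.natDegree with h | h
  · obtain ⟨a, rfl⟩ := natDegree_eq_zero.mp h
    have ha : a ≠ 0 := fun h' => h0 (by rw [h', map_zero])
    exact absurd (isUnit_C.mpr ha.isUnit) hnu
  · exact h

lemma Dp_dvd_one_contra {m : ℕ} (hm : Dp ∣ X ^ m - 1)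
    (cert : ∃ U V : Polynomial (ZMod 2), U * Dp + V * (X ^ m - 1) = 1) : False := by
  obtain ⟨U, V, hUV⟩ := cert
  have h1 : Dp ∣ 1 := by
    rw [← hUV]
    exact dvd_add (Dvd.dvd.mul_left dvd_rfl U) (Dvd.dvd.mul_left hm V)
  have := natDegree_eq_zero_of_isUnit (isUnit_of_dvd_one h1)
  rw [Dp_natDegree] at this
  exact absurd this (by norm_num)

lemma small_factor_contra (A : Polynomial (ZMod 2)) (hdvd : A ∣ Dp) (hnu : ¬ IsUnit A)
    (h0 : A ≠ 0) (hle : A.natDegree ≤ 4) : False := by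
  obtain ⟨P, hPirr, hPdvd⟩ := WfDvdMonoid.exists_irreducible_factor hnu h0
  have hPD : P ∣ Dp := hPdvd.trans hdvd
  have hP0 : P ≠ 0 := hPirr.ne_zero
  have hdP : P.natDegree ≤ 4 := le_trans (natDegree_le_of_dvd hPdvd h0) hle
  have hdpos : 0 < P.natDegree := natDegree_pos_of_not_unit P hP0 hPirr.not_isUnit
  have hx : ¬ (X : Polynomial (ZMod 2)) ∣ P := fun hXP => not_X_dvd_Dp (hXP.trans hPD)
  have hper := irreducible_dvd_pow_sub_one P hPirr hx
  have hcases : P.natDegree = 1 ∨ P.natDegree = 2 ∨ P.natDegree = 3 ∨ P.natDegree = 4 := by omega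
  have h15or7 : P ∣ X ^ 15 - 1 ∨ P ∣ X ^ 7 - 1 := by
    rcases hcases with h | h | h | h <;> rw [h] at hper <;> norm_num at hper
    · have h15 : (X ^ 1 - 1 : Polynomial (ZMod 2)) ∣ X ^ 15 - 1 :=
        pow_sub_one_dvd_pow_sub_one (by norm_num)
      rw [pow_one] at h15
      exact Or.inl (hper.trans h15)
    · exact Or.inl (hper.trans (pow_sub_one_dvd_pow_sub_one (by norm_num)))
    · exact Or.inr hper
    · exact Or.inl hper
  have hP1 : P ∣ 1 := by
    rcases h15or7 with h | h
    · rw [← bez15]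
      exact dvd_add (Dvd.dvd.mul_left hPD _) (Dvd.dvd.mul_left h _)
    · rw [← bez7]
      exact dvd_add (Dvd.dvd.mul_left hPD _) (Dvd.dvd.mul_left h _)
  exact hPirr.not_isUnit (isUnit_of_dvd_one hP1)

lemma Dp_irreducible : Irreducible Dp := by
  by_contra hred
  have hnu : ¬ IsUnit Dp := by
    intro hu
    have := natDegree_eq_zero_of_isUnit hu
    rw [Dp_natDegree] at this
    exact absurd this (by norm_num)
  rw [irreducible_iff] at hred
  push_neg at hred
  obtain ⟨A, B, hAB, hA, hB⟩ := hred hnu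
  have hA0 : A ≠ 0 := by rintro rfl; rw [zero_mul] at hAB; exact Dp_ne_zero hAB
  have hB0 : B ≠ 0 := by rintro rfl; rw [mul_zero] at hAB; exact Dp_ne_zero hAB
  have hdeg : A.natDegree + B.natDegree = 8 := by
    rw [← natDegree_mul hA0 hB0, ← hAB, Dp_natDegree]
  rcases le_or_gt A.natDegree 4 with hle | hlt
  · exact small_factor_contra A ⟨B, hAB⟩ hA hA0 hle
  · exact small_factor_contra B ⟨A, by rw [hAB, mul_comm]⟩ hB hB0 (by omega)

lemma Dp_dvd_255 : Dp ∣ X ^ 255 - 1 := by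
  have h := irreducible_dvd_pow_sub_one Dp Dp_irreducible not_X_dvd_Dp
  rw [Dp_natDegree] at h
  norm_num at h
  exact h

lemma Dp_period : HasPeriod Dp 255 := by
  refine ⟨by norm_num, Dp_dvd_255, ?_⟩
  intro m hm hdvd
  by_contra hlt
  push_neg at hlt
  have hg := dvd_pow_gcd_sub_one Dp m 255 hdvd Dp_dvd_255
  have hgdvd : Nat.gcd m 255 ∣ 255 := Nat.gcd_dvd_right m 255
  have hgm : Nat.gcd m 255 ∣ m := Nat.gcd_dvd_left m 255
  have hgpos : 0 < Nat.gcd m 255 := Nat.gcd_pos_of_pos_left 255 hm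
  have hglt : Nat.gcd m 255 < 255 := lt_of_le_of_lt (Nat.le_of_dvd hm hgm) hlt
  set g := Nat.gcd m 255 with hgdef
  have h3 : g ∣ 15 ∨ g ∣ 51 ∨ g ∣ 85 := by
    clear_value g
    clear hgdef hg hgm
    interval_cases g <;> revert hgdvd <;> decide
  rcases h3 with h | h | h
  · exact (Dp_dvd_one_contra (hg.trans (pow_sub_one_dvd_pow_sub_one h))
      ⟨_, _, bez15⟩).elim
  · exact (Dp_dvd_one_contra (hg.trans (pow_sub_one_dvd_pow_sub_one h))
      ⟨_, _, bez51⟩).elim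
  · exact (Dp_dvd_one_contra (hg.trans (pow_sub_one_dvd_pow_sub_one h))
      ⟨_, _, bez85⟩).elim

lemma factorization13 :
    (X ^ 13 + X + 1 : Polynomial (ZMod 2)) = (X ^ 5 + X ^ 4 + X ^ 3 + X + 1) * Dp := by
  unfold Dp
  ring_nf
  simp only [two_zero, four_zero, neg_one_one, mul_zero, zero_mul, mul_one, one_mul,
    add_zero, zero_add]

/-- Over GF(2), `X^13 + X + 1` factors as `(X^5 + X^4 + X^3 + X + 1) · D`,
where `D` is a primitive polynomial of degree 8; hence `X^13 + X + 1` is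
almost primitive with exponent `8 = 2^3` and increment 5. -/
theorem trinomial_13_1_almost_primitive :
    ∃ D : Polynomial (ZMod 2),
      (X ^ 13 + X + 1 : Polynomial (ZMod 2)) =
        (X ^ 5 + X ^ 4 + X ^ 3 + X + 1) * D ∧
      IsPrimitivePoly D ∧ D.natDegree = 8 ∧ 13 < 2 * 8 := by
  refine ⟨Dp, factorization13, ⟨?_, Dp_irreducible, ?_⟩, Dp_natDegree, by norm_num⟩
  · rw [Dp_natDegree]; norm_num
  · rw [Dp_natDegree]
    have h : (2 : ℕ) ^ 8 - 1 = 255 := by norm_num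
    rw [h]
    exact Dp_period
end

section
/- Let r and δ be integers with 0 ≤ δ < r. Let I_r denote the number of monic irreducible polynomials of degree r over GF(2) other than X, and let N_{r,δ} denote the number of monic polynomials P of degree r + δ over GF(2) with P(0) ≠ 0 that have an irreducible factor of degree r (i.e., the almost irreducible polynomials with exponent r and increment δ). Then N_{r,δ} = 2^{max(0, δ−1)} · I_r. -/
/-!
Since `δ < r`, an irreducible factor `D` of degree `r` of `P` is unique, so `P ↦ (D, P / D)` is a
bijection onto the pairs of a monic irreducible `D ≠ X` of degree `r` and a monic cofactor `Q` of
degree `δ` with `Q(0) ≠ 0`. Over GF(2) such a `Q` is `X^δ + X * S + 1` with `deg S < δ - 1`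
arbitrary (or `Q = 1` when `δ = 0`), which gives `2^(δ-1)` choices.
-/

open Polynomial

namespace Polynomial

section Counting

variable {R : Type*} [Ring R]

theorem injective_X_mul_add_C : Function.Injective (fun p : R[X] × R ↦ X * p.1 + C p.2) := by
  rintro ⟨S₁, c₁⟩ ⟨S₂, c₂⟩ h
  have hc : c₁ = c₂ := by simpa using congrArg (coeff · 0) h
  subst hc
  simpa using isRegular_X.left (add_right_cancel h)

variable [Nontrivial R]

theorem setOf_monic_natDegree_eq_image (n : ℕ) :
    {P : R[X] | P.Monic ∧ P.natDegree = n} = (X ^ n + ·) '' (degreeLT R n : Set R[X]) := by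
  ext P
  simp only [Set.mem_ofPred_eq, Set.mem_image, SetLike.mem_coe, mem_degreeLT]
  constructor
  · rintro ⟨hP, rfl⟩
    refine ⟨P.eraseLead, ?_, ?_⟩
    · rw [← degree_eq_natDegree hP.ne_zero]
      exact degree_eraseLead_lt hP.ne_zero
    · simpa [hP.leadingCoeff, add_comm] using P.eraseLead_add_C_mul_X_pow
  · rintro ⟨f, hf, rfl⟩
    refine ⟨monic_X_pow_add hf, ?_⟩
    rw [natDegree_add_eq_left_of_degree_lt (by rwa [degree_X_pow]), natDegree_X_pow]

theorem ncard_monic_natDegree_eq (n : ℕ) :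
    {P : R[X] | P.Monic ∧ P.natDegree = n}.ncard = Nat.card R ^ n := by
  rw [setOf_monic_natDegree_eq_image, Set.ncard_image_of_injective _ (add_right_injective _),
    ← Nat.card_coe_set_eq, SetLike.coe_sort_coe, Nat.card_congr (degreeLTEquiv R n).toEquiv,
    Nat.card_fun, Nat.card_fin]

theorem setOf_monic_natDegree_succ_coeff_zero_ne_zero_eq_image (n : ℕ) :
    {Q : R[X] | Q.Monic ∧ Q.natDegree = n + 1 ∧ Q.coeff 0 ≠ 0} =
      (fun p : R[X] × R ↦ X * p.1 + C p.2) ''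
        ({S : R[X] | S.Monic ∧ S.natDegree = n} ×ˢ {c : R | c ≠ 0}) := by
  ext Q
  simp only [Set.mem_ofPred_eq, Set.mem_image, Set.mem_prod, Prod.exists]
  constructor
  · rintro ⟨hQ, hdeg, h0⟩
    refine ⟨Q.divX, Q.coeff 0, ⟨⟨?_, ?_⟩, h0⟩, X_mul_divX_add Q⟩
    · rw [Monic, leadingCoeff, natDegree_divX_eq_natDegree_tsub_one, coeff_divX, hdeg,
        Nat.add_sub_cancel, ← hdeg]
      exact hQ
    · rw [natDegree_divX_eq_natDegree_tsub_one, hdeg, Nat.add_sub_cancel]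
  · rintro ⟨S, c, ⟨⟨hS, rfl⟩, hc⟩, rfl⟩
    have hlt : (C c).degree < (X * S).degree := by
      exact degree_C_le.trans_lt <|
        natDegree_pos_iff_degree_pos.mp (by rw [natDegree_X_mul hS.ne_zero]; omega)
    refine ⟨(monic_X.mul hS).add_of_left hlt, ?_, by simpa using hc⟩
    rw [natDegree_add_eq_left_of_degree_lt hlt, natDegree_X_mul hS.ne_zero, add_comm]

theorem ncard_monic_natDegree_succ_coeff_zero_ne_zero [Finite R] (n : ℕ) :
    {Q : R[X] | Q.Monic ∧ Q.natDegree = n + 1 ∧ Q.coeff 0 ≠ 0}.ncard =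
      Nat.card R ^ n * (Nat.card R - 1) := by
  rw [setOf_monic_natDegree_succ_coeff_zero_ne_zero_eq_image,
    Set.ncard_image_of_injective _ injective_X_mul_add_C, Set.ncard_prod,
    ncard_monic_natDegree_eq]
  change _ * ({0}ᶜ : Set R).ncard = _
  rw [Set.ncard_compl, Set.ncard_singleton]

end Counting

theorem eval_zero_ne_zero_of_irreducible {R : Type*} [CommRing R] [IsDomain R] {D : R[X]}
    (hD : D.Monic) (hirr : Irreducible D) (hX : D ≠ X) : D.eval 0 ≠ 0 := by
  rw [← coeff_zero_eq_eval_zero]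
  exact fun h ↦ hX (eq_of_monic_of_associated monic_X hD
    (irreducible_X.associated_of_dvd hirr (X_dvd_iff.mpr h))).symm

section Field

variable {K : Type*} [Field K]

theorem injOn_mul_of_natDegree_lt {r δ : ℕ} (hδr : δ < r) :
    Set.InjOn (fun p : K[X] × K[X] ↦ p.1 * p.2)
      ({D | D.Monic ∧ Irreducible D ∧ D.natDegree = r} ×ˢ {Q | Q.Monic ∧ Q.natDegree = δ}) := by
  rintro ⟨D₁, Q₁⟩ ⟨⟨hD₁, hirr₁, hdeg₁ : D₁.natDegree = r⟩, -⟩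
    ⟨D₂, Q₂⟩ ⟨⟨hD₂, hirr₂, -⟩, hQ₂, hdeg₂ : Q₂.natDegree = δ⟩ (h : D₁ * Q₁ = D₂ * Q₂)
  have hD₁D₂ : D₁ ∣ D₂ := by
    refine (hirr₁.prime.dvd_or_dvd (h ▸ dvd_mul_right D₁ Q₁)).resolve_right fun hdvd ↦ ?_
    have : D₁.natDegree ≤ Q₂.natDegree := natDegree_le_of_dvd hdvd hQ₂.ne_zero
    omega
  obtain rfl := eq_of_monic_of_associated hD₁ hD₂ (hirr₁.associated_of_dvd hirr₂ hD₁D₂)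
  rw [mul_left_cancel₀ hD₁.ne_zero h]

theorem setOf_almostIrreducible_eq_image_mul (r δ : ℕ) :
    {P : K[X] | P.Monic ∧ P.natDegree = r + δ ∧ P.eval 0 ≠ 0 ∧
        ∃ D : K[X], Irreducible D ∧ D.natDegree = r ∧ D ∣ P} =
      (fun p : K[X] × K[X] ↦ p.1 * p.2) ''
        ({D | D.Monic ∧ Irreducible D ∧ D.natDegree = r ∧ D ≠ X} ×ˢ
          {Q | Q.Monic ∧ Q.natDegree = δ ∧ Q.eval 0 ≠ 0}) := by
  ext P
  simp only [Set.mem_ofPred_eq, Set.mem_image, Set.mem_prod, Prod.exists]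
  constructor
  · rintro ⟨hP, hdeg, h0, D, hirr, hdegD, Q, rfl⟩
    have hlc : D.leadingCoeff ≠ 0 := leadingCoeff_ne_zero.mpr hirr.ne_zero
    set D' := D * C D.leadingCoeff⁻¹
    have hD' : D'.Monic := monic_mul_leadingCoeff_inv hirr.ne_zero
    have hdegD' : D'.natDegree = r := hdegD ▸ natDegree_mul_leadingCoeff_inv D hirr.ne_zero
    have hirr' : Irreducible D' :=
      (irreducible_mul_isUnit (isUnit_C.mpr (inv_ne_zero hlc).isUnit)).mpr hirr
    have hP' : D * Q = D' * (C D.leadingCoeff * Q) := by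
      rw [mul_assoc, ← mul_assoc (C _), ← C_mul, inv_mul_cancel₀ hlc, C_1, one_mul]
    rw [hP'] at hP hdeg h0 ⊢
    have hQ' := hD'.of_mul_monic_left hP
    rw [natDegree_mul hD'.ne_zero hQ'.ne_zero, hdegD'] at hdeg
    rw [eval_mul] at h0
    refine ⟨D', _, ⟨⟨hD', hirr', hdegD', ?_⟩, hQ', by omega, right_ne_zero_of_mul h0⟩, rfl⟩
    exact fun hX ↦ left_ne_zero_of_mul h0 (by rw [hX, eval_X])
  · rintro ⟨D, Q, ⟨⟨hD, hirr, rfl, hX⟩, hQ, rfl, h0⟩, rfl⟩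
    refine ⟨hD.mul hQ, natDegree_mul hD.ne_zero hQ.ne_zero, ?_, D, hirr, rfl, dvd_mul_right D Q⟩
    rw [eval_mul]
    exact mul_ne_zero (eval_zero_ne_zero_of_irreducible hD hirr hX) h0

end Field

theorem ncard_monic_natDegree_eval_zero_ne_zero_zmod_two (n : ℕ) :
    {Q : (ZMod 2)[X] | Q.Monic ∧ Q.natDegree = n ∧ Q.eval 0 ≠ 0}.ncard = 2 ^ (n - 1) := by
  cases n with
  | zero =>
    have : {Q : (ZMod 2)[X] | Q.Monic ∧ Q.natDegree = 0 ∧ Q.eval 0 ≠ 0} = {1} := by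
      ext Q
      simp only [Set.mem_ofPred_eq, Set.mem_singleton_iff]
      constructor
      · rintro ⟨hQ, hdeg, -⟩
        exact hQ.natDegree_eq_zero.mp hdeg
      · rintro rfl
        simp
    rw [this, Set.ncard_singleton]
    rfl
  | succ n =>
    simp_rw [← coeff_zero_eq_eval_zero]
    rw [ncard_monic_natDegree_succ_coeff_zero_ne_zero, Nat.card_zmod]
    simp

end Polynomial

/-- The density of almost irreducible polynomials: for `0 ≤ δ < r`, the number
of monic polynomials `P` of degree `r + δ` over GF(2) with `P(0) ≠ 0` having
an irreducible factor of degree `r` equals `2^(max 0 (δ-1))` times the number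
of monic irreducible polynomials of degree `r` other than `X`. -/
theorem almost_irreducible_count (r δ : ℕ) (hδr : δ < r) :
    {P : Polynomial (ZMod 2) | P.Monic ∧ P.natDegree = r + δ ∧ P.eval 0 ≠ 0 ∧
        ∃ D : Polynomial (ZMod 2), Irreducible D ∧ D.natDegree = r ∧ D ∣ P}.ncard =
      2 ^ (max 0 (δ - 1)) *
        {Q : Polynomial (ZMod 2) | Q.Monic ∧ Irreducible Q ∧ Q.natDegree = r ∧
          Q ≠ X}.ncard := by
  rw [setOf_almostIrreducible_eq_image_mul, Set.InjOn.ncard_image, Set.ncard_prod,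
    ncard_monic_natDegree_eval_zero_ne_zero_zmod_two, Nat.zero_max, mul_comm]
  refine (injOn_mul_of_natDegree_lt hδr).mono (Set.prod_mono (fun _ h ↦ ?_) fun _ h ↦ ?_)
  exacts [⟨h.1, h.2.1, h.2.2.1⟩, ⟨h.1, h.2.1⟩]
end

section
/- Let r and δ be integers with 0 ≤ δ < r. Let P_r denote the number of primitive polynomials of degree r over GF(2), and let M_{r,δ} denote the number of monic polynomials P of degree r + δ over GF(2) with P(0) ≠ 0 that have a primitive factor of degree r (i.e., the almost primitive polynomials with exponent r and increment δ). Then M_{r,δ} = 2^{max(0, δ−1)} · P_r. -/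
open Polynomial

lemma zmod2_eq_one {a : ZMod 2} (h : a ≠ 0) : a = 1 := by revert a; decide

lemma monic_of_ne_zero {D : Polynomial (ZMod 2)} (h : D ≠ 0) : D.Monic :=
  zmod2_eq_one (leadingCoeff_ne_zero.mpr h)

/-- A primitive polynomial has nonzero constant term. -/
lemma eval_zero_ne_zero_of_primitive {D : Polynomial (ZMod 2)} (h : IsPrimitivePoly D) :
    D.eval 0 ≠ 0 := by
  obtain ⟨hd, _, hρpos, hdvd, _⟩ := h
  obtain ⟨E, hE⟩ := hdvd
  intro h0
  have heval := congrArg (eval (0 : ZMod 2)) hE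
  rw [eval_sub, eval_pow, eval_X, eval_one, eval_mul, h0, zero_mul,
    zero_pow hρpos.ne'] at heval
  rw [zero_sub] at heval
  exact one_ne_zero (neg_eq_zero.mp heval)

/-- Counting monic polynomials of degree δ with nonzero constant term. -/
lemma qcount (δ : ℕ) :
    {Q : Polynomial (ZMod 2) | Q.Monic ∧ Q.natDegree = δ ∧ Q.eval 0 ≠ 0}.ncard = 2 ^ (δ - 1) := by
  cases δ with
  | zero =>
    have hset : {Q : Polynomial (ZMod 2) | Q.Monic ∧ Q.natDegree = 0 ∧ Q.eval 0 ≠ 0} = {1} := by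
      ext Q
      simp only [Set.mem_setOf_eq, Set.mem_singleton_iff]
      constructor
      · rintro ⟨hm, hd, _⟩
        exact eq_one_of_monic_natDegree_zero hm hd
      · rintro rfl
        refine ⟨monic_one, natDegree_one, by simp⟩
    rw [hset]
    simp
  | succ d =>
    -- The bijection with coefficient vectors
    set F : (Fin d → ZMod 2) → Polynomial (ZMod 2) :=
      fun f => X ^ (d + 1) + C 1 + ∑ i : Fin d, C (f i) * X ^ ((i : ℕ) + 1) with hF
    have hsum : ∀ (f : Fin d → ZMod 2) (k : ℕ),
        (∑ i : Fin d, C (f i) * X ^ ((i : ℕ) + 1)).coeff k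
          = ∑ i : Fin d, if k = (i : ℕ) + 1 then f i else 0 := by
      intro f k
      rw [finset_sum_coeff]
      refine Finset.sum_congr rfl fun i _ => ?_
      simp [coeff_X_pow, mul_ite]
    have hcoeff : ∀ (f : Fin d → ZMod 2) (k : ℕ),
        (F f).coeff k = (if k = d + 1 then 1 else 0) + (if k = 0 then 1 else 0)
          + ∑ i : Fin d, if k = (i : ℕ) + 1 then f i else 0 := by
      intro f k
      simp only [hF, coeff_add, coeff_X_pow, coeff_C, hsum]
    have c0 : ∀ f, (F f).coeff 0 = 1 := by
      intro f
      rw [hcoeff]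
      rw [if_neg (by omega), if_pos rfl,
        Finset.sum_eq_zero (fun i _ => if_neg (by omega))]
      ring
    have ctop : ∀ f, (F f).coeff (d + 1) = 1 := by
      intro f
      rw [hcoeff]
      rw [if_pos rfl, if_neg (by omega),
        Finset.sum_eq_zero (fun i _ => if_neg (by have := i.isLt; omega))]
      ring
    have cmid : ∀ f (j : ℕ) (hj : j < d), (F f).coeff (j + 1) = f ⟨j, hj⟩ := by
      intro f j hj
      rw [hcoeff, if_neg (by omega), if_neg (by omega)]
      rw [Finset.sum_eq_single ⟨j, hj⟩]
      · simp
      · intro i _ hi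
        refine if_neg fun h => hi ?_
        have hij : (i : ℕ) = j := by omega
        exact Fin.ext (by simp [hij])
      · intro h
        exact absurd (Finset.mem_univ _) h
    have chigh : ∀ f (k : ℕ), d + 1 < k → (F f).coeff k = 0 := by
      intro f k hk
      rw [hcoeff, if_neg (by omega), if_neg (by omega),
        Finset.sum_eq_zero (fun i _ => if_neg (by have := i.isLt; omega))]
      ring
    have hdeg : ∀ f, (F f).natDegree = d + 1 := by
      intro f
      refine le_antisymm (natDegree_le_iff_coeff_eq_zero.mpr (fun N hN => chigh f N hN)) ?_
      exact le_natDegree_of_ne_zero (by rw [ctop]; exact one_ne_zero)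
    have hFmem : ∀ f, F f ∈ {Q : Polynomial (ZMod 2) | Q.Monic ∧ Q.natDegree = d + 1 ∧
        Q.eval 0 ≠ 0} := by
      intro f
      refine ⟨?_, hdeg f, ?_⟩
      · have : (F f).leadingCoeff = 1 := by
          rw [leadingCoeff, hdeg f, ctop]
        exact this
      · rw [← coeff_zero_eq_eval_zero, c0]
        exact one_ne_zero
    have hrange : {Q : Polynomial (ZMod 2) | Q.Monic ∧ Q.natDegree = d + 1 ∧ Q.eval 0 ≠ 0}
        = Set.range F := by
      ext Q
      constructor
      · rintro ⟨hm, hQd, h0⟩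
        refine ⟨fun i => Q.coeff ((i : ℕ) + 1), ?_⟩
        ext k
        rcases Nat.lt_or_ge k 1 with hk | hk
        · interval_cases k
          rw [c0]
          rw [← coeff_zero_eq_eval_zero] at h0
          exact (zmod2_eq_one h0).symm
        · obtain ⟨j, rfl⟩ : ∃ j, k = j + 1 := ⟨k - 1, by omega⟩
          rcases Nat.lt_trichotomy j d with hj | hj | hj
          · rw [cmid _ j hj]
          · subst hj
            rw [ctop]
            have := hm.coeff_natDegree
            rw [hQd] at this
            exact this.symm
          · rw [chigh _ _ (by omega)]
            exact (coeff_eq_zero_of_natDegree_lt (by omega)).symm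
      · rintro ⟨f, rfl⟩
        exact hFmem f
    have hFinj : Function.Injective F := by
      intro f g hfg
      funext i
      have h1 := cmid f i.1 i.2
      have h2 := cmid g i.1 i.2
      rw [hfg] at h1
      rw [h1] at h2
      simpa using h2
    rw [hrange, ← Nat.card_coe_set_eq, Nat.card_range_of_injective hFinj]
    simp [Nat.card_eq_fintype_card]

/-- The density of almost primitive polynomials: for `0 ≤ δ < r`, the number
of monic polynomials `P` of degree `r + δ` over GF(2) with `P(0) ≠ 0` having
a primitive factor of degree `r` equals `2^(max 0 (δ-1))` times the number
of primitive polynomials of degree `r`. -/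
theorem almost_primitive_count (r δ : ℕ) (hδr : δ < r) :
    {P : Polynomial (ZMod 2) | P.Monic ∧ P.natDegree = r + δ ∧ P.eval 0 ≠ 0 ∧
        ∃ D : Polynomial (ZMod 2), IsPrimitivePoly D ∧ D.natDegree = r ∧ D ∣ P}.ncard =
      2 ^ (max 0 (δ - 1)) *
        {Q : Polynomial (ZMod 2) | IsPrimitivePoly Q ∧ Q.natDegree = r}.ncard := by
  set T := {Q : Polynomial (ZMod 2) | IsPrimitivePoly Q ∧ Q.natDegree = r} with hT
  set Qs := {Q : Polynomial (ZMod 2) | Q.Monic ∧ Q.natDegree = δ ∧ Q.eval 0 ≠ 0} with hQs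
  have hset : {P : Polynomial (ZMod 2) | P.Monic ∧ P.natDegree = r + δ ∧ P.eval 0 ≠ 0 ∧
        ∃ D : Polynomial (ZMod 2), IsPrimitivePoly D ∧ D.natDegree = r ∧ D ∣ P}
      = (fun p : Polynomial (ZMod 2) × Polynomial (ZMod 2) => p.1 * p.2) '' (T ×ˢ Qs) := by
    ext P
    constructor
    · rintro ⟨hm, hdeg, h0, D, hDprim, hDr, Q, rfl⟩
      have hD0 : D ≠ 0 := hDprim.2.1.ne_zero
      have hQ0 : Q ≠ 0 := right_ne_zero_of_mul hm.ne_zero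
      have hQd : Q.natDegree = δ := by
        have := natDegree_mul hD0 hQ0
        rw [hdeg, hDr] at this
        omega
      have hQe : Q.eval 0 ≠ 0 := by
        rw [eval_mul] at h0
        exact right_ne_zero_of_mul h0
      exact ⟨(D, Q), ⟨⟨hDprim, hDr⟩, monic_of_ne_zero hQ0, hQd, hQe⟩, rfl⟩
    · rintro ⟨⟨D, Q⟩, ⟨⟨hDprim, hDr⟩, hQm, hQd, hQe⟩, rfl⟩
      have hD0 : D ≠ 0 := hDprim.2.1.ne_zero
      have hQ0 : Q ≠ 0 := hQm.ne_zero
      refine ⟨(monic_of_ne_zero hD0).mul hQm, ?_, ?_, D, hDprim, hDr, Dvd.intro Q rfl⟩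
      · rw [natDegree_mul hD0 hQ0, hDr, hQd]
      · rw [eval_mul]
        exact mul_ne_zero (eval_zero_ne_zero_of_primitive hDprim) hQe
  have hinj : Set.InjOn (fun p : Polynomial (ZMod 2) × Polynomial (ZMod 2) => p.1 * p.2)
      (T ×ˢ Qs) := by
    rintro ⟨D, Q⟩ ⟨⟨hDprim, hDr⟩, hQm, hQd, _⟩ ⟨D', Q'⟩ ⟨⟨hD'prim, hD'r⟩, hQ'm, hQ'd, _⟩ heq
    simp only at heq
    have hD0 : D ≠ 0 := hDprim.2.1.ne_zero
    have hD'0 : D' ≠ 0 := hD'prim.2.1.ne_zero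
    have hQ'0 : Q' ≠ 0 := hQ'm.ne_zero
    have hprime : Prime D := UniqueFactorizationMonoid.irreducible_iff_prime.mp hDprim.2.1
    have hdvd : D ∣ D' * Q' := heq ▸ Dvd.intro Q rfl
    have hDD' : D = D' := by
      rcases hprime.2.2 D' Q' hdvd with h | h
      · obtain ⟨c, hc⟩ := h
        have hc0 : c ≠ 0 := by
          rintro rfl
          exact hD'0 (by simp [hc])
        have hcd : c.natDegree = 0 := by
          have := natDegree_mul hD0 hc0
          rw [← hc, hD'r, hDr] at this
          omega
        have : c = 1 := eq_one_of_monic_natDegree_zero (monic_of_ne_zero hc0) hcd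
        rw [hc, this, mul_one]
      · have := natDegree_le_of_dvd h hQ'0
        rw [hDr, hQ'd] at this
        omega
    subst hDD'
    have : Q = Q' := mul_left_cancel₀ hD0 heq
    rw [this]
  have hprod : (T ×ˢ Qs).ncard = T.ncard * Qs.ncard := by
    rw [← Nat.card_coe_set_eq, ← Nat.card_coe_set_eq, ← Nat.card_coe_set_eq,
      Nat.card_congr (Equiv.Set.prod T Qs), Nat.card_prod]
  rw [hset, Set.ncard_image_of_injOn hinj, hprod, hQs, qcount δ, Nat.zero_max, Nat.mul_comm]
end
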